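/- arXiv:2605.19519 — 2 statements merged into one kernel-verified Lean document; each statement's English description precedes it below -/
import Mathlib

section
/- The global Fréchet R-squared characterizes the null hypothesis of no regression effect: under H₀^G, i.e., P(m⊕(X) = ω⊕) = 1, one has R²⊕ = 0; conversely, if P(m⊕(X) ≠ ω⊕) > 0, then M(m⊕(X), X) < M(ω⊕, X) on a set of positive probability and hence R²⊕ > 0. Equivalently, D(P) = E(M(ω⊕, X)) − E(M(m⊕(X), X)) ≥ 0, with D(P) = 0 if and only if m⊕(X) = ω⊕ almost surely. -/
/- The global Fréchet R-squared characterizes the null hypothesis of no regression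
   effect: R²⊕ = 0 under H₀^G, R²⊕ > 0 otherwise; equivalently D(P) ≥ 0 with
   D(P) = 0 iff m⊕(X) = ω⊕ almost surely. -/

open MeasureTheory ProbabilityTheory Filter Set
open scoped Topology ENNReal NNReal BigOperators

noncomputable section

namespace FrechetRegression

variable {p : ℕ} {Ω : Type*} [MetricSpace Ω] [MeasurableSpace Ω] [BorelSpace Ω]

/-- predictor space -/
abbrev E (p : ℕ) := EuclideanSpace ℝ (Fin p)

/-- population mean of the predictor under the joint law `P` on `E p × Ω`. -/
def popMean (P : Measure (E p × Ω)) : E p := ∫ zy, zy.1 ∂P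

/-- population covariance matrix of the predictor under `P`. -/
def popCov (P : Measure (E p × Ω)) : Matrix (Fin p) (Fin p) ℝ :=
  Matrix.of fun i j => ∫ zy, (zy.1 i - popMean P i) * (zy.1 j - popMean P j) ∂P

/-- the weight function s(z,x) = 1 + (z−μ)ᵀ A (x−μ), where `A` is (an inverse of) a
covariance matrix. -/
def wt (μv : E p) (A : Matrix (Fin p) (Fin p) ℝ) (z x : E p) : ℝ :=
  1 + dotProduct (fun i => z i - μv i) (A.mulVec fun i => x i - μv i)

/-- the global Fréchet regression objective M(ω,x) = E(s(X,x) d²(ω,Y)). -/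
def Mobj (P : Measure (E p × Ω)) (ω : Ω) (x : E p) : ℝ :=
  ∫ zy, wt (popMean P) (popCov P)⁻¹ zy.1 x * dist ω zy.2 ^ 2 ∂P

variable {Θ : Type*} [MeasurableSpace Θ]

/-- sample mean of the predictors. -/
def sampleMean (X : ℕ → Θ → E p) (n : ℕ) (θ : Θ) : E p :=
  (n : ℝ)⁻¹ • ∑ j ∈ Finset.range n, X j θ

/-- sample covariance matrix of the predictors. -/
def sampleCov (X : ℕ → Θ → E p) (n : ℕ) (θ : Θ) : Matrix (Fin p) (Fin p) ℝ :=
  Matrix.of fun i j => (n : ℝ)⁻¹ * ∑ k ∈ Finset.range n,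
    (X k θ i - sampleMean X n θ i) * (X k θ j - sampleMean X n θ j)

/-- empirical Fréchet regression objective
M_n(ω,x) = n⁻¹ Σ_j s_j(x) d²(ω, Y_j) with estimated weights. -/
def Mn (X : ℕ → Θ → E p) (Y : ℕ → Θ → Ω) (n : ℕ) (θ : Θ) (ω : Ω) (x : E p) : ℝ :=
  (n : ℝ)⁻¹ * ∑ j ∈ Finset.range n,
    wt (sampleMean X n θ) (sampleCov X n θ)⁻¹ (X j θ) x * dist ω (Y j θ) ^ 2

/-- Assumption 1: uniform local Lipschitz property of the squared distance. -/
def Assumption1 (Ω : Type*) [MetricSpace Ω] : Prop :=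
  ∃ ε > (0 : ℝ), ∃ L > (0 : ℝ), ∀ ω₁ ω₂ : Ω, dist ω₁ ω₂ < ε →
    ∀ y : Ω, |dist ω₁ y ^ 2 - dist ω₂ y ^ 2| ≤ L * dist ω₁ ω₂

/-- Assumption 2: closed balls of some fixed radius `r > 0` are totally bounded. -/
def Assumption2 (Ω : Type*) [MetricSpace Ω] : Prop :=
  ∃ r > (0 : ℝ), ∀ ω : Ω, TotallyBounded (Metric.closedBall ω r)

/-- Assumption 3: for each x ∈ D the Fréchet regression function m⊕(x) is the unique
minimizer of M(·,x), and it is well separated uniformly in x ∈ D. -/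
def Assumption3 (P : Measure (E p × Ω)) (D : Set (E p)) (m : E p → Ω) : Prop :=
  (∀ x ∈ D, IsMinOn (fun ω => Mobj P ω x) univ (m x)) ∧
  (∀ x ∈ D, ∀ ω : Ω, Mobj P ω x = Mobj P (m x) x → ω = m x) ∧
  (∀ ε > (0 : ℝ), ∃ Δ > (0 : ℝ), ∀ x ∈ D, ∀ ω : Ω, ε < dist ω (m x) →
    Δ ≤ Mobj P ω x - Mobj P (m x) x)

/-- `B`-many ε-brackets in L₂(P) covering the function class `G`. -/
def HasBracketing (P : Measure (E p × Ω)) (ε : ℝ) (G : Set ((E p × Ω) → ℝ))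
    (B : ℕ) : Prop :=
  ∃ gl gu : Fin B → (E p × Ω) → ℝ,
    (∀ j, Real.sqrt (∫ zy, (gu j zy - gl j zy) ^ 2 ∂P) < ε) ∧
    ∀ g ∈ G, ∃ j, ∀ zy, gl j zy ≤ g zy ∧ g zy ≤ gu j zy

/-- L₂(P)-bracketing number. -/
def bracketNum (P : Measure (E p × Ω)) (ε : ℝ) (G : Set ((E p × Ω) → ℝ)) : ℕ :=
  sInf {B : ℕ | HasBracketing P ε G B}

/-- the function class G_δ = {s(·,x)(d²(ω,·) − d²(m⊕(x),·)) : x ∈ D, d(ω, m⊕(x)) ≤ δ}. -/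
def Gclass (P : Measure (E p × Ω)) (D : Set (E p)) (m : E p → Ω) (δ : ℝ) :
    Set ((E p × Ω) → ℝ) :=
  {g | ∃ x ∈ D, ∃ ω : Ω, dist ω (m x) ≤ δ ∧
    g = fun zy => wt (popMean P) (popCov P)⁻¹ zy.1 x *
      (dist ω zy.2 ^ 2 - dist (m x) zy.2 ^ 2)}

/-- the bracketing entropy integral J(δ). -/
def Jint (P : Measure (E p × Ω)) (D : Set (E p)) (m : E p → Ω) (c δ : ℝ) : ℝ :=
  ∫ ε in (0:ℝ)..1,
    Real.sqrt (1 + Real.log (bracketNum P (c * ε * δ) (Gclass P D m δ)))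

/-- Assumption 4 (with exponent η): for every c > 0, J(δ) = O(δ^{−η}) as δ → 0⁺. -/
def Assumption4 (P : Measure (E p × Ω)) (D : Set (E p)) (m : E p → Ω) (η : ℝ) : Prop :=
  ∀ c > (0 : ℝ),
    (fun δ : ℝ => Jint P D m c δ) =O[𝓝[>] (0:ℝ)] fun δ : ℝ => δ ^ (-η)


theorem global_R_squared_characterization
    [TopologicalSpace.SeparableSpace Ω]
    (P : Measure (E p × Ω)) [IsProbabilityMeasure P]
    (D : Set (E p)) (hDclosed : IsClosed D) (hDbdd : Bornology.IsBounded D)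
    (hXD : ∀ᵐ zy ∂P, zy.1 ∈ D)
    (hSigma : IsUnit (popCov P).det)
    -- the Fréchet regression function m⊕: for each x ∈ D the unique minimizer of M(·,x)
    (m : E p → Ω)
    (hmin : ∀ x ∈ D, IsMinOn (fun ω => Mobj P ω x) univ (m x))
    (huniq : ∀ x ∈ D, ∀ ω : Ω, Mobj P ω x = Mobj P (m x) x → ω = m x)
    -- the Fréchet mean ω⊕: the unique minimizer of ω ↦ E(d²(ω,Y))
    (ω₀ : Ω)
    (hω₀min : IsMinOn (fun ω => ∫ zy, dist ω zy.2 ^ 2 ∂P) univ ω₀)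
    (hω₀uniq : ∀ ω : Ω, IsMinOn (fun ω' => ∫ zy, dist ω' zy.2 ^ 2 ∂P) univ ω → ω = ω₀)
    -- integrability and nondegeneracy: 0 < E(M(ω⊕,X)) < ∞
    (hInt0 : Integrable (fun zy => Mobj P ω₀ zy.1) P)
    (hIntm : Integrable (fun zy => Mobj P (m zy.1) zy.1) P)
    (hpos : 0 < ∫ zy, Mobj P ω₀ zy.1 ∂P) :
    -- conclusions
    (0 ≤ (∫ zy, Mobj P ω₀ zy.1 ∂P) - ∫ zy, Mobj P (m zy.1) zy.1 ∂P) ∧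
    ((∫ zy, Mobj P ω₀ zy.1 ∂P) - (∫ zy, Mobj P (m zy.1) zy.1 ∂P) = 0 ↔
      (∀ᵐ zy ∂P, m zy.1 = ω₀)) ∧
    ((∀ᵐ zy ∂P, m zy.1 = ω₀) →
      1 - (∫ zy, Mobj P (m zy.1) zy.1 ∂P) / (∫ zy, Mobj P ω₀ zy.1 ∂P) = 0) ∧
    (P {zy | m zy.1 ≠ ω₀} ≠ 0 →
      P {zy | Mobj P (m zy.1) zy.1 < Mobj P ω₀ zy.1} ≠ 0 ∧
      0 < 1 - (∫ zy, Mobj P (m zy.1) zy.1 ∂P) / (∫ zy, Mobj P ω₀ zy.1 ∂P)) := by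
  set F : E p × Ω → ℝ := fun zy => Mobj P (m zy.1) zy.1 with hF
  set G : E p × Ω → ℝ := fun zy => Mobj P ω₀ zy.1 with hG
  have hle : ∀ᵐ zy ∂P, F zy ≤ G zy :=
    hXD.mono fun zy hz => hmin zy.1 hz (mem_univ ω₀)
  have hIle : ∫ zy, F zy ∂P ≤ ∫ zy, G zy ∂P := integral_mono_ae hIntm hInt0 hle
  have h1 : 0 ≤ (∫ zy, G zy ∂P) - ∫ zy, F zy ∂P := sub_nonneg.mpr hIle
  have hzero : ((∫ zy, G zy ∂P) - ∫ zy, F zy ∂P = 0) ↔ ∀ᵐ zy ∂P, m zy.1 = ω₀ := by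
    constructor
    · intro h
      have hint : ∫ zy, (G zy - F zy) ∂P = 0 := by
        rw [integral_sub hInt0 hIntm]; linarith
      have hae : ∀ᵐ zy ∂P, G zy - F zy = 0 :=
        (integral_eq_zero_iff_of_nonneg_ae
          (hle.mono fun zy h => sub_nonneg.mpr h) (hInt0.sub hIntm)).mp hint
      filter_upwards [hae, hXD] with zy h0 hD
      exact (huniq zy.1 hD ω₀ (by simpa [hF, hG] using sub_eq_zero.mp h0)).symm
    · intro h
      have : ∫ zy, F zy ∂P = ∫ zy, G zy ∂P :=
        integral_congr_ae (h.mono fun zy hz => by simp [hF, hG, hz])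
      linarith
  refine ⟨h1, hzero, ?_, ?_⟩
  · intro h
    have heq : ∫ zy, F zy ∂P = ∫ zy, G zy ∂P := by
      have := hzero.mpr h; linarith
    rw [heq, div_self (ne_of_gt hpos), sub_self]
  · intro hne
    have hPne : ¬ (∀ᵐ zy ∂P, m zy.1 = ω₀) := by
      intro h
      exact hne (by simpa [ae_iff] using h)
    have hDnull : P {zy : E p × Ω | zy.1 ∉ D} = 0 := by
      simpa [ae_iff] using hXD
    have hsub : {zy : E p × Ω | m zy.1 ≠ ω₀} ∩ {zy | zy.1 ∈ D}
        ⊆ {zy | Mobj P (m zy.1) zy.1 < Mobj P ω₀ zy.1} := by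
      rintro zy ⟨hmne, hD⟩
      have hle' : Mobj P (m zy.1) zy.1 ≤ Mobj P ω₀ zy.1 := hmin zy.1 hD (mem_univ ω₀)
      refine lt_of_le_of_ne hle' fun hEq => hmne ?_
      exact (huniq zy.1 hD ω₀ hEq.symm).symm
    have hinterpos : P ({zy : E p × Ω | m zy.1 ≠ ω₀} ∩ {zy | zy.1 ∈ D}) ≠ 0 := by
      intro h0
      apply hne
      have := measure_le_inter_add_diff P {zy : E p × Ω | m zy.1 ≠ ω₀} {zy | zy.1 ∈ D}
      have hdiff : P ({zy : E p × Ω | m zy.1 ≠ ω₀} \ {zy | zy.1 ∈ D}) = 0 :=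
        measure_mono_null (fun zy hz => hz.2) hDnull
      simpa [h0, hdiff] using this
    constructor
    · exact fun h0 => hinterpos (measure_mono_null hsub h0)
    · have hlt : ∫ zy, F zy ∂P < ∫ zy, G zy ∂P := by
        rcases lt_or_eq_of_le hIle with h | h
        · exact h
        · exact absurd (hzero.mp (by linarith)) hPne
      have : (∫ zy, F zy ∂P) / (∫ zy, G zy ∂P) < 1 := (div_lt_one hpos).mpr hlt
      linarith

end FrechetRegression
end
end

section
/- In the spherical data-generating model where U | X = Exp_{m(X)}(e), with m(x) = (sin h(x), cos h(x) cos φ, cos h(x) sin φ), h(x) = α₀ + β x₁ + γ x₂, and tangent-space noise e = W(e₁ν₁ + e₂ν₂) ∈ T_{m(x)}𝕊²₊ whose conditional distribution given X is symmetric about the origin (e_j = σ(2Z_j − 1) with Z_j i.i.d. Beta(1/2, 1/2) independent of X, W independent of (Z₁, Z₂), and ‖e‖ within the injectivity radius of 𝕊²₊), the function m(x) equals the conditional Fréchet mean of U given X = x with respect to the geodesic distance d(b₁, b₂) = arccos(b₁ᵀb₂); i.e., the global Fréchet regression target m⊕,U(x) is unbiased for m(x). (Supplement S.2.2) -/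
/- Supplement S.2.2: in the spherical data-generating model U = Exp_{m(x)}(e) with
   tangent-space noise symmetric about the origin, the function m(x) is the conditional
   Fréchet mean of U given X = x with respect to the geodesic distance
   d(b₁,b₂) = arccos(b₁ᵀb₂); i.e. the global Fréchet regression target is unbiased. -/

open MeasureTheory ProbabilityTheory Filter Set Real
open scoped Topology ENNReal NNReal BigOperators

noncomputable section

namespace SphericalFrechet

abbrev E3 := EuclideanSpace ℝ (Fin 3)

/-- the positive orthant of the unit sphere 𝕊²₊. -/
def S2pos : Set E3 := {b | ‖b‖ = 1 ∧ ∀ j, 0 ≤ b j}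

/-- geodesic distance on the sphere: d(b₁,b₂) = arccos(b₁ᵀb₂). -/
def geod (b₁ b₂ : E3) : ℝ := Real.arccos (inner ℝ b₁ b₂ : ℝ)

/-- the exponential map Exp_m(e) = cos(‖e‖) m + sin(‖e‖) e/‖e‖. -/
def expMap (m e : E3) : E3 := Real.cos ‖e‖ • m + (Real.sin ‖e‖ * ‖e‖⁻¹) • e

/-- a vector of `E3` from coordinates. -/
def vec3 (a b c : ℝ) : E3 := (WithLp.equiv 2 (Fin 3 → ℝ)).symm ![a, b, c]

/-- the link function h(x) = α₀ + β x₁ + γ x₂. -/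
def hlink (α₀ β γ x₁ x₂ : ℝ) : ℝ := α₀ + β * x₁ + γ * x₂

/-- the regression function m(x) = (sin h(x), cos h(x) cos φ, cos h(x) sin φ). -/
def mreg (α₀ β γ φ x₁ x₂ : ℝ) : E3 :=
  vec3 (Real.sin (hlink α₀ β γ x₁ x₂))
    (Real.cos (hlink α₀ β γ x₁ x₂) * Real.cos φ)
    (Real.cos (hlink α₀ β γ x₁ x₂) * Real.sin φ)

/-- the tangent basis vector ν₁ = (0, −sin φ, cos φ). -/
def nu1 (φ : ℝ) : E3 := vec3 0 (-Real.sin φ) (Real.cos φ)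

/-- the tangent basis vector ν₂ = (cos h, −sin h cos φ, −sin h sin φ). -/
def nu2 (α₀ β γ φ x₁ x₂ : ℝ) : E3 :=
  vec3 (Real.cos (hlink α₀ β γ x₁ x₂))
    (-(Real.sin (hlink α₀ β γ x₁ x₂) * Real.cos φ))
    (-(Real.sin (hlink α₀ β γ x₁ x₂) * Real.sin φ))

/-- the Beta(1/2,1/2) distribution on (0,1). -/
def betaHalfHalf : Measure ℝ :=
  volume.withDensity fun z =>
    ENNReal.ofReal (Set.indicator (Ioo (0:ℝ) 1)
      (fun z => (Real.pi * Real.sqrt (z * (1 - z)))⁻¹) z)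


/-! ### Auxiliary lemmas -/

lemma inner_vec3 (a b c a' b' c' : ℝ) :
    (inner ℝ (vec3 a b c) (vec3 a' b' c') : ℝ) = a*a' + b*b' + c*c' := by
  simp [vec3, PiLp.inner_apply, Fin.sum_univ_three, RCLike.inner_apply]; ring

lemma norm_sq_vec3 (a b c : ℝ) : ‖vec3 a b c‖^2 = a^2 + b^2 + c^2 := by
  rw [← real_inner_self_eq_norm_sq, inner_vec3]; ring

lemma arccos_anti {x y : ℝ} (h : x ≤ y) : Real.arccos y ≤ Real.arccos x := by
  rw [Real.arccos_eq_pi_div_two_sub_arcsin, Real.arccos_eq_pi_div_two_sub_arcsin]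
  linarith [Real.monotone_arcsin h]

lemma inner_abs_le_one {u v : E3} (hu : ‖u‖ = 1) (hv : ‖v‖ = 1) : |(inner ℝ u v : ℝ)| ≤ 1 := by
  have := abs_real_inner_le_norm u v
  rwa [hu, hv, mul_one] at this

lemma cos_geod {u v : E3} (hu : ‖u‖ = 1) (hv : ‖v‖ = 1) :
    Real.cos (geod u v) = (inner ℝ u v : ℝ) :=
  Real.cos_arccos (neg_le_of_abs_le (inner_abs_le_one hu hv))
    (le_of_abs_le (inner_abs_le_one hu hv))

lemma geod_nonneg (a b : E3) : 0 ≤ geod a b := Real.arccos_nonneg _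

lemma geod_le_pi (a b : E3) : geod a b ≤ π := Real.arccos_le_pi _

lemma geod_comm (a b : E3) : geod a b = geod b a := by
  rw [geod, geod, real_inner_comm]

lemma abs_geod_sq_le (a b : E3) : |geod a b ^ 2| ≤ π ^ 2 := by
  rw [abs_of_nonneg (sq_nonneg _)]
  exact pow_le_pow_left₀ (geod_nonneg a b) (geod_le_pi a b) 2

/-- the spherical triangle inequality for `geod` on unit vectors. -/
lemma geod_triangle (a b c : E3) (ha : ‖a‖ = 1) (hb : ‖b‖ = 1) (hc : ‖c‖ = 1) :
    geod a c ≤ geod a b + geod b c := by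
  set α := geod a b with hα
  set β := geod b c with hβ
  have hα0 : 0 ≤ α := Real.arccos_nonneg _
  have hβ0 : 0 ≤ β := Real.arccos_nonneg _
  by_cases hπ : π ≤ α + β
  · calc geod a c ≤ π := Real.arccos_le_pi _
      _ ≤ α + β := hπ
  push_neg at hπ
  have hab : (inner ℝ a b : ℝ) = Real.cos α := (cos_geod ha hb).symm
  have hbc : (inner ℝ b c : ℝ) = Real.cos β := (cos_geod hb hc).symm
  have hcb : (inner ℝ c b : ℝ) = Real.cos β := by rw [real_inner_comm]; exact hbc
  set a' : E3 := a - (inner ℝ a b : ℝ) • b with ha'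
  set c' : E3 := c - (inner ℝ c b : ℝ) • b with hc'
  have hbb : (inner ℝ b b : ℝ) = 1 := by
    rw [real_inner_self_eq_norm_sq, hb]; norm_num
  have hba' : (inner ℝ b a' : ℝ) = 0 := by
    rw [ha', inner_sub_right, real_inner_smul_right, hbb, real_inner_comm b a,
      real_inner_comm a b]; ring
  have hbc' : (inner ℝ b c' : ℝ) = 0 := by
    rw [hc', inner_sub_right, real_inner_smul_right, hbb, real_inner_comm b c,
      real_inner_comm c b]; ring
  have hna' : ‖a'‖^2 = Real.sin α ^ 2 := by
    rw [ha', norm_sub_sq_real, real_inner_smul_right, norm_smul, hab, ha, hb, Real.sin_sq]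
    simp [mul_pow, sq_abs]; ring
  have hnc' : ‖c'‖^2 = Real.sin β ^ 2 := by
    rw [hc', norm_sub_sq_real, real_inner_smul_right, norm_smul, hcb, hc, hb, Real.sin_sq]
    simp [mul_pow, sq_abs]; ring
  have hsinα : 0 ≤ Real.sin α := Real.sin_nonneg_of_nonneg_of_le_pi hα0 (Real.arccos_le_pi _)
  have hsinβ : 0 ≤ Real.sin β := Real.sin_nonneg_of_nonneg_of_le_pi hβ0 (Real.arccos_le_pi _)
  have hna : ‖a'‖ = Real.sin α := by nlinarith [norm_nonneg a']
  have hnc : ‖c'‖ = Real.sin β := by nlinarith [norm_nonneg c']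
  have hac : (inner ℝ a c : ℝ) = Real.cos α * Real.cos β + (inner ℝ a' c' : ℝ) := by
    have hadecomp : a = a' + (inner ℝ a b : ℝ) • b := by rw [ha']; abel
    have hcdecomp : c = c' + (inner ℝ c b : ℝ) • b := by rw [hc']; abel
    have expand : (inner ℝ a c : ℝ)
        = inner ℝ (a' + (inner ℝ a b : ℝ) • b) (c' + (inner ℝ c b : ℝ) • b) := by
      rw [← hadecomp, ← hcdecomp]
    rw [expand]
    rw [inner_add_left, inner_add_right, inner_add_right, real_inner_smul_left,
      real_inner_smul_left, real_inner_smul_right, real_inner_smul_right]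
    have hab' : (inner ℝ a' b : ℝ) = 0 := by rw [real_inner_comm]; exact hba'
    rw [hab', hbc', hbb, hab, hcb]
    ring
  have hCS : |(inner ℝ a' c' : ℝ)| ≤ Real.sin α * Real.sin β := by
    have := abs_real_inner_le_norm a' c'
    rwa [hna, hnc] at this
  have hkey : Real.cos (α + β) ≤ (inner ℝ a c : ℝ) := by
    rw [Real.cos_add, hac]
    linarith [neg_le_of_abs_le hCS]
  calc geod a c ≤ Real.arccos (Real.cos (α+β)) := arccos_anti hkey
    _ = α + β := Real.arccos_cos (by linarith) (le_of_lt hπ)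

lemma sq_eq_one' {x : ℝ} (h0 : 0 ≤ x) (h : x^2 = 1) : x = 1 := by nlinarith

lemma two_sq_le' {a p : ℝ} (ha : 0 ≤ a) (hp : a < p/2) (h0 : 0 ≤ p) : 2*a^2 ≤ p^2 := by
  nlinarith

lemma zero_of_sq' {d : ℝ} (hd : 0 ≤ d) (h : d^2 + d^2 = 2*(0:ℝ)^2) : d = 0 := by nlinarith

lemma midpoint_eq' {t d d' : ℝ} (ht : 0 ≤ t) (hd : 0 ≤ d) (hd' : 0 ≤ d')
    (heq : d^2 + d'^2 = 2*t^2) (htri : 2*t ≤ d + d') : d = t ∧ d' = t := by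
  have h1 : d + d' ≤ 2*t := by nlinarith [sq_nonneg (d - d')]
  have h2 : d + d' = 2*t := le_antisymm h1 htri
  have h3 : (d - d')^2 = 0 := by nlinarith
  have h4 : d = d' := by nlinarith
  constructor <;> linarith

lemma quad_ineq {t d d' : ℝ} (ht : 0 ≤ t) (hd : 0 ≤ d) (hd' : 0 ≤ d')
    (htri : 2*t ≤ d + d') : 2*t^2 ≤ d^2 + d'^2 := by
  nlinarith [sq_nonneg (d - d')]

lemma expMap_zero (m : E3) : expMap m 0 = m := by
  simp [expMap]

lemma expMap_neg (m v : E3) : expMap m (-v) =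
    Real.cos ‖v‖ • m - (Real.sin ‖v‖ * ‖v‖⁻¹) • v := by
  simp [expMap, sub_eq_add_neg]

section ExpGeom

variable {m v : E3} (hm : ‖m‖ = 1) (hmv : (inner ℝ m v : ℝ) = 0)

include hm hmv in
lemma norm_expMap (hv : ‖v‖ < π) : ‖expMap m v‖ = 1 := by
  rcases eq_or_ne v 0 with rfl | hv0
  · simp [expMap_zero, hm]
  have hvpos : 0 < ‖v‖ := norm_pos_iff.mpr hv0
  have h2 : ‖expMap m v‖^2 = 1 := by
    rw [expMap, norm_add_sq_real, norm_smul, norm_smul, real_inner_smul_left,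
      real_inner_smul_right, hmv, hm]
    have hsin : 0 ≤ Real.sin ‖v‖ := Real.sin_nonneg_of_nonneg_of_le_pi (norm_nonneg v) hv.le
    rw [Real.norm_eq_abs, Real.norm_eq_abs,
      abs_of_nonneg (by positivity : (0:ℝ) ≤ Real.sin ‖v‖ * ‖v‖⁻¹)]
    rw [mul_pow, mul_pow]
    have hinv : (‖v‖⁻¹)^2 * ‖v‖^2 = 1 := by field_simp
    have habs : |Real.cos ‖v‖| ^ 2 = Real.cos ‖v‖ ^2 := sq_abs _
    rw [habs]
    nlinarith [Real.sin_sq_add_cos_sq ‖v‖]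
  nlinarith [norm_nonneg (expMap m v)]

include hm hmv in
lemma inner_expMap : (inner ℝ m (expMap m v) : ℝ) = Real.cos ‖v‖ := by
  rw [expMap, inner_add_right, real_inner_smul_right, real_inner_smul_right, hmv,
    real_inner_self_eq_norm_sq, hm]
  ring

include hm hmv in
lemma geod_expMap (hv : ‖v‖ ≤ π) : geod m (expMap m v) = ‖v‖ := by
  rw [geod, inner_expMap hm hmv, Real.arccos_cos (norm_nonneg v) hv]

include hm hmv in
lemma inner_expMap_expMap_neg :
    (inner ℝ (expMap m v) (expMap m (-v)) : ℝ) = Real.cos (2 * ‖v‖) := by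
  rcases eq_or_ne v 0 with rfl | hv0
  · rw [neg_zero, expMap_zero, real_inner_self_eq_norm_sq, hm]; simp
  have hvpos : 0 < ‖v‖ := norm_pos_iff.mpr hv0
  rw [expMap_neg, expMap]
  simp only [inner_sub_right, inner_add_left, real_inner_smul_left, real_inner_smul_right]
  have hvm : (inner ℝ v m : ℝ) = 0 := by rw [real_inner_comm]; exact hmv
  rw [hvm, hmv, real_inner_self_eq_norm_sq, real_inner_self_eq_norm_sq, hm, Real.cos_two_mul']
  have : (Real.sin ‖v‖ * ‖v‖⁻¹) * ((Real.sin ‖v‖ * ‖v‖⁻¹) * ‖v‖^2) = Real.sin ‖v‖ ^2 := by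
    field_simp
  nlinarith [this]

include hm hmv in
lemma geod_expMap_expMap_neg (hv : ‖v‖ < π/2) :
    geod (expMap m v) (expMap m (-v)) = 2 * ‖v‖ := by
  rw [geod, inner_expMap_expMap_neg hm hmv,
    Real.arccos_cos (by positivity) (by linarith [norm_nonneg v])]

end ExpGeom

instance : SFinite betaHalfHalf := by
  unfold betaHalfHalf; infer_instance

lemma betaDensity_measurable : Measurable fun z : ℝ =>
    ENNReal.ofReal (Set.indicator (Ioo (0:ℝ) 1)
      (fun z => (Real.pi * Real.sqrt (z * (1 - z)))⁻¹) z) := by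
  apply ENNReal.measurable_ofReal.comp
  apply Measurable.indicator _ measurableSet_Ioo
  fun_prop

lemma betaDensity_symm (z : ℝ) :
    ENNReal.ofReal (Set.indicator (Ioo (0:ℝ) 1)
      (fun z => (Real.pi * Real.sqrt (z * (1 - z)))⁻¹) (1 - z)) =
    ENNReal.ofReal (Set.indicator (Ioo (0:ℝ) 1)
      (fun z => (Real.pi * Real.sqrt (z * (1 - z)))⁻¹) z) := by
  congr 1
  by_cases hz : z ∈ Ioo (0:ℝ) 1
  · have hz' : 1 - z ∈ Ioo (0:ℝ) 1 := by constructor <;> [linarith [hz.2]; linarith [hz.1]]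
    rw [indicator_of_mem hz', indicator_of_mem hz]
    ring_nf
  · have hz' : 1 - z ∉ Ioo (0:ℝ) 1 := by
      simp only [mem_Ioo, not_and_or, not_lt] at hz ⊢
      rcases hz with h | h
      · right; linarith
      · left; linarith
    rw [indicator_of_notMem hz', indicator_of_notMem hz]

lemma measurePreserving_beta_symm :
    MeasurePreserving (fun z : ℝ => 1 - z) betaHalfHalf betaHalfHalf := by
  have hT : Measurable (fun z : ℝ => 1 - z) := measurable_const.sub measurable_id
  refine ⟨hT, ?_⟩
  have hmp : MeasurePreserving (fun z : ℝ => 1 - z) volume volume :=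
    Measure.measurePreserving_sub_left volume 1
  set g := fun z : ℝ => ENNReal.ofReal (Set.indicator (Ioo (0:ℝ) 1)
      (fun z => (Real.pi * Real.sqrt (z * (1 - z)))⁻¹) z) with hg
  ext s hs
  rw [Measure.map_apply hT hs, betaHalfHalf, withDensity_apply _ (hT hs), withDensity_apply _ hs]
  rw [← lintegral_indicator (hT hs), ← lintegral_indicator hs]
  have hind : ∀ z, Set.indicator ((fun z : ℝ => 1 - z) ⁻¹' s) g z
      = Set.indicator s g (1 - z) := by
    intro z
    rcases Classical.em (z ∈ (fun z : ℝ => 1 - z) ⁻¹' s) with h | h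
    · rw [indicator_of_mem h, indicator_of_mem (by exact h), hg]
      exact (betaDensity_symm z).symm
    · rw [indicator_of_notMem h, indicator_of_notMem (by exact h)]
  calc ∫⁻ z, Set.indicator ((fun z : ℝ => 1 - z) ⁻¹' s) g z ∂volume
      = ∫⁻ z, Set.indicator s g (1 - z) ∂volume := lintegral_congr hind
    _ = ∫⁻ z, Set.indicator s g z ∂volume :=
        hmp.lintegral_comp ((betaDensity_measurable).indicator hs)

set_option maxHeartbeats 1000000 in
theorem spherical_model_unbiasedness
    {Θ : Type*} [MeasurableSpace Θ] (μ : Measure Θ) [IsProbabilityMeasure μ]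
    -- parameters: 0 < φ < π/2, α₀ > 0, β, γ ≥ 0, 0 < α₀ + β + γ < π/2, σ > 0
    (α₀ β γ φ σ : ℝ) (hφ0 : 0 < φ) (hφ1 : φ < Real.pi / 2)
    (hα₀ : 0 < α₀) (hβ : 0 ≤ β) (hγ : 0 ≤ γ) (hsum : α₀ + β + γ < Real.pi / 2)
    (hσ : 0 < σ)
    -- a fixed predictor value x = (x₁,x₂) ∈ [0,1]²; conditionally on X = x the noise
    -- below is independent of X, so the conditional law of U given X = x is the law
    -- of Exp_{m(x)}(e)
    (x₁ x₂ : ℝ) (hx₁ : x₁ ∈ Icc (0:ℝ) 1) (hx₂ : x₂ ∈ Icc (0:ℝ) 1)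
    -- the tangent-space noise: e = W(e₁ν₁ + e₂ν₂), e_j = σ(2Z_j − 1),
    -- Z₁, Z₂ i.i.d. Beta(1/2,1/2), W independent of (Z₁, Z₂)
    (W Z₁ Z₂ : Θ → ℝ)
    (hWmeas : Measurable W) (hZ₁meas : Measurable Z₁) (hZ₂meas : Measurable Z₂)
    (hZ₁law : Measure.map Z₁ μ = betaHalfHalf)
    (hZ₂law : Measure.map Z₂ μ = betaHalfHalf)
    (hZindep : IndepFun Z₁ Z₂ μ)
    (hWindep : IndepFun W (fun θ => (Z₁ θ, Z₂ θ)) μ)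
    -- the noise and the response
    (e : Θ → E3)
    (he : ∀ θ, e θ = W θ • ((σ * (2 * Z₁ θ - 1)) • nu1 φ +
      (σ * (2 * Z₂ θ - 1)) • nu2 α₀ β γ φ x₁ x₂))
    (U : Θ → E3)
    (hU : ∀ θ, U θ = expMap (mreg α₀ β γ φ x₁ x₂) (e θ))
    -- ‖e‖ stays within the injectivity radius and the response stays in 𝕊²₊
    (hinj : ∀ᵐ θ ∂μ, ‖e θ‖ < Real.pi / 2 ∧ U θ ∈ S2pos) :
    -- conclusion: m(x) lies in 𝕊²₊ and is the unique minimizer over 𝕊²₊ of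
    -- ω ↦ E(d²(ω, U) | X = x), i.e. it is the conditional Fréchet mean of U given X = x
    mreg α₀ β γ φ x₁ x₂ ∈ S2pos ∧
    IsMinOn (fun ω => ∫ θ, geod ω (U θ) ^ 2 ∂μ) S2pos (mreg α₀ β γ φ x₁ x₂) ∧
    ∀ ω ∈ S2pos, IsMinOn (fun ω' => ∫ θ, geod ω' (U θ) ^ 2 ∂μ) S2pos ω →
      ω = mreg α₀ β γ φ x₁ x₂ := by
  have hπ := Real.pi_pos
  set m : E3 := mreg α₀ β γ φ x₁ x₂ with hmdef
  set H : ℝ := hlink α₀ β γ x₁ x₂ with hHdef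
  -- basic range facts about H and φ
  have hH0 : 0 < H := by
    have := mul_nonneg hβ hx₁.1
    have := mul_nonneg hγ hx₂.1
    rw [hHdef, hlink]; linarith
  have hH2 : H < π/2 := by
    have h1 : β * x₁ ≤ β := mul_le_of_le_one_right hβ hx₁.2
    have h2 : γ * x₂ ≤ γ := mul_le_of_le_one_right hγ hx₂.2
    rw [hHdef, hlink]; linarith
  have hsinH : 0 ≤ Real.sin H := Real.sin_nonneg_of_nonneg_of_le_pi hH0.le (by linarith)
  have hcosH : 0 ≤ Real.cos H := Real.cos_nonneg_of_mem_Icc ⟨by linarith, hH2.le⟩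
  have hsinφ : 0 ≤ Real.sin φ := Real.sin_nonneg_of_nonneg_of_le_pi hφ0.le (by linarith)
  have hcosφ : 0 ≤ Real.cos φ := Real.cos_nonneg_of_mem_Icc ⟨by linarith, hφ1.le⟩
  -- m is a unit vector
  have hm1 : ‖m‖ = 1 := by
    have h2 : ‖m‖^2 = 1 := by
      rw [hmdef, mreg, norm_sq_vec3, ← hHdef]
      linear_combination Real.cos H ^ 2 * Real.sin_sq_add_cos_sq φ + Real.sin_sq_add_cos_sq H
    exact sq_eq_one' (norm_nonneg m) h2
  -- m ∈ S2pos
  have hmS : m ∈ S2pos := by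
    refine ⟨hm1, fun j => ?_⟩
    have hv : ∀ a b c : ℝ, (vec3 a b c) j = ![a,b,c] j := fun a b c => rfl
    rw [hmdef, mreg, hv, ← hHdef]
    fin_cases j
    · simpa using hsinH
    · simpa using mul_nonneg hcosH hcosφ
    · simpa using mul_nonneg hcosH hsinφ
  -- m is orthogonal to the tangent vectors, hence to the noise
  have hmnu1 : (inner ℝ m (nu1 φ) : ℝ) = 0 := by
    rw [hmdef, mreg, nu1, inner_vec3, ← hHdef]; ring
  have hmnu2 : (inner ℝ m (nu2 α₀ β γ φ x₁ x₂) : ℝ) = 0 := by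
    rw [hmdef, mreg, nu2, inner_vec3, ← hHdef]
    linear_combination (-(Real.sin H * Real.cos H)) * Real.sin_sq_add_cos_sq φ
  have hme : ∀ θ, (inner ℝ m (e θ) : ℝ) = 0 := by
    intro θ
    rw [he θ, real_inner_smul_right, inner_add_right, real_inner_smul_right,
      real_inner_smul_right, hmnu1, hmnu2]
    ring
  -- measurability of the basic maps
  have hexpmeas : Measurable (expMap m) := by
    have : Measurable fun v : E3 => Real.cos ‖v‖ • m + (Real.sin ‖v‖ * ‖v‖⁻¹) • v :=
      ((Real.measurable_cos.comp measurable_norm).smul measurable_const).add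
        (((Real.measurable_sin.comp measurable_norm).mul measurable_norm.inv).smul
          measurable_id)
    exact this
  have hGmeas : ∀ ω : E3, Measurable (fun v : E3 => geod ω (expMap m v)^2) := by
    intro ω
    have h1 : Measurable fun v : E3 => (inner ℝ ω (expMap m v) : ℝ) :=
      ((continuous_const.inner continuous_id).measurable).comp hexpmeas
    exact ((Real.continuous_arccos.measurable.comp h1).pow_const 2)
  -- the noise as a function of (W, Z₁, Z₂)
  set Φ : ℝ × (ℝ × ℝ) → E3 := fun p =>
    p.1 • ((σ * (2 * p.2.1 - 1)) • nu1 φ + (σ * (2 * p.2.2 - 1)) • nu2 α₀ β γ φ x₁ x₂)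
    with hΦdef
  set V : Θ → ℝ × (ℝ × ℝ) := fun θ => (W θ, (Z₁ θ, Z₂ θ)) with hVdef
  have hVmeas : Measurable V := hWmeas.prodMk (hZ₁meas.prodMk hZ₂meas)
  have hΦmeas : Measurable Φ := by
    apply Measurable.smul measurable_fst
    exact ((measurable_const.mul ((measurable_fst.comp measurable_snd).const_mul 2
        |>.sub measurable_const)).smul measurable_const).add
      ((measurable_const.mul ((measurable_snd.comp measurable_snd).const_mul 2
        |>.sub measurable_const)).smul measurable_const)
  have heΦ : ∀ θ, e θ = Φ (V θ) := fun θ => he θ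
  have hemeas : Measurable e := by
    have : e = fun θ => Φ (V θ) := funext heΦ
    rw [this]; exact hΦmeas.comp hVmeas
  -- joint law and the symmetry S
  have hlawV : μ.map V = (μ.map W).prod (betaHalfHalf.prod betaHalfHalf) := by
    rw [hVdef]
    rw [(indepFun_iff_map_prod_eq_prod_map_map hWmeas.aemeasurable
      (hZ₁meas.prodMk hZ₂meas).aemeasurable).mp hWindep,
      (indepFun_iff_map_prod_eq_prod_map_map hZ₁meas.aemeasurable
      hZ₂meas.aemeasurable).mp hZindep, hZ₁law, hZ₂law]
  set S : ℝ × (ℝ × ℝ) → ℝ × (ℝ × ℝ) :=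
    Prod.map id (Prod.map (fun z => 1 - z) (fun z => 1 - z)) with hSdef
  have hmpS : MeasurePreserving S (μ.map V) (μ.map V) := by
    rw [hlawV]
    exact (MeasurePreserving.id _).prod
      (measurePreserving_beta_symm.prod measurePreserving_beta_symm)
  have hΦS : ∀ p, Φ (S p) = - Φ p := by
    intro p
    have h1 : σ * (2 * (1 - p.2.1) - 1) = -(σ * (2 * p.2.1 - 1)) := by ring
    have h2 : σ * (2 * (1 - p.2.2) - 1) = -(σ * (2 * p.2.2 - 1)) := by ring
    show p.1 • ((σ * (2 * (1 - p.2.1) - 1)) • nu1 φ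
        + (σ * (2 * (1 - p.2.2) - 1)) • nu2 α₀ β γ φ x₁ x₂) = _
    rw [h1, h2, hΦdef]
    module
  -- the symmetry of the Fréchet functional
  have hsymm : ∀ ω : E3, ∫ θ, geod ω (expMap m (e θ))^2 ∂μ
      = ∫ θ, geod ω (expMap m (-(e θ)))^2 ∂μ := by
    intro ω
    have hG := hGmeas ω
    have hm1' : Measurable fun p => geod ω (expMap m (Φ p))^2 := hG.comp hΦmeas
    have hm2' : Measurable fun p => geod ω (expMap m (-(Φ p)))^2 := hG.comp hΦmeas.neg
    calc ∫ θ, geod ω (expMap m (e θ))^2 ∂μ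
        = ∫ θ, geod ω (expMap m (Φ (V θ)))^2 ∂μ := by simp only [heΦ]
      _ = ∫ p, geod ω (expMap m (Φ p))^2 ∂(μ.map V) :=
          (integral_map hVmeas.aemeasurable hm1'.aestronglyMeasurable).symm
      _ = ∫ p, geod ω (expMap m (Φ (S p)))^2 ∂(μ.map V) := by
          conv_lhs => rw [← hmpS.map_eq]
          exact integral_map hmpS.measurable.aemeasurable hm1'.aestronglyMeasurable
      _ = ∫ p, geod ω (expMap m (-(Φ p)))^2 ∂(μ.map V) := by simp only [hΦS]
      _ = ∫ θ, geod ω (expMap m (-(Φ (V θ))))^2 ∂μ :=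
          integral_map hVmeas.aemeasurable hm2'.aestronglyMeasurable
      _ = ∫ θ, geod ω (expMap m (-(e θ)))^2 ∂μ := by simp only [heΦ]
  -- integrability
  have hint : ∀ f : Θ → ℝ, Measurable f → (∀ᵐ θ ∂μ, ‖f θ‖ ≤ π^2) → Integrable f μ :=
    fun f hf hb => Integrable.mono' (integrable_const (π^2)) hf.aestronglyMeasurable hb
  have hIgp : ∀ ω : E3, Integrable (fun θ => geod ω (expMap m (e θ))^2) μ := by
    intro ω
    refine hint _ ((hGmeas ω).comp hemeas) (Eventually.of_forall fun θ => ?_)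
    rw [Real.norm_eq_abs]; exact abs_geod_sq_le _ _
  have hIgm : ∀ ω : E3, Integrable (fun θ => geod ω (expMap m (-(e θ)))^2) μ := by
    intro ω
    refine hint _ ((hGmeas ω).comp hemeas.neg) (Eventually.of_forall fun θ => ?_)
    rw [Real.norm_eq_abs]; exact abs_geod_sq_le _ _
  have hIe : Integrable (fun θ => 2*‖e θ‖^2) μ := by
    refine hint _ ((hemeas.norm.pow_const 2).const_mul 2) ?_
    filter_upwards [hinj] with θ hθ
    rw [Real.norm_eq_abs, abs_of_nonneg (by positivity)]
    exact two_sq_le' (norm_nonneg (e θ)) hθ.1 hπ.le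
  -- the key pointwise inequality
  have hkey : ∀ ω : E3, ‖ω‖ = 1 → ∀ v : E3, (inner ℝ m v : ℝ) = 0 → ‖v‖ < π/2 →
      2*‖v‖^2 ≤ geod ω (expMap m v)^2 + geod ω (expMap m (-v))^2 := by
    intro ω hω v hmv hv
    have hvπ : ‖v‖ < π := by linarith
    have hp : ‖expMap m v‖ = 1 := norm_expMap hm1 hmv hvπ
    have hmv' : (inner ℝ m (-v) : ℝ) = 0 := by rw [inner_neg_right, hmv]; ring
    have hp' : ‖expMap m (-v)‖ = 1 := norm_expMap hm1 hmv' (by rwa [norm_neg])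
    have htri : 2*‖v‖ ≤ geod ω (expMap m v) + geod ω (expMap m (-v)) := by
      have h1 := geod_triangle (expMap m v) ω (expMap m (-v)) hp hω hp'
      rw [geod_expMap_expMap_neg hm1 hmv hv, geod_comm (expMap m v) ω] at h1
      linarith
    exact quad_ineq (norm_nonneg v) (geod_nonneg _ _) (geod_nonneg _ _) htri
  -- value at m
  have hFU : ∀ ω : E3, (∫ θ, geod ω (U θ)^2 ∂μ) = ∫ θ, geod ω (expMap m (e θ))^2 ∂μ := by
    intro ω; apply integral_congr_ae
    filter_upwards [] with θ
    rw [hU θ]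
  have hAm : (∫ θ, geod m (expMap m (e θ))^2 ∂μ) = ∫ θ, ‖e θ‖^2 ∂μ := by
    apply integral_congr_ae
    filter_upwards [hinj] with θ hθ
    rw [geod_expMap hm1 (hme θ) (by linarith [hθ.1])]
  -- minimality
  have hmin : ∀ ω ∈ S2pos, (∫ θ, geod m (U θ)^2 ∂μ) ≤ ∫ θ, geod ω (U θ)^2 ∂μ := by
    intro ω hω
    have hIsum : Integrable
        (fun θ => geod ω (expMap m (e θ))^2 + geod ω (expMap m (-(e θ)))^2) μ :=
      (hIgp ω).add (hIgm ω)
    have hchain : ∫ θ, 2*‖e θ‖^2 ∂μ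
        ≤ ∫ θ, (geod ω (expMap m (e θ))^2 + geod ω (expMap m (-(e θ)))^2) ∂μ := by
      apply integral_mono_ae hIe hIsum
      filter_upwards [hinj] with θ hθ
      exact hkey ω hω.1 (e θ) (hme θ) hθ.1
    rw [integral_add (hIgp ω) (hIgm ω)] at hchain
    have h2 : ∫ θ, 2*‖e θ‖^2 ∂μ = 2 * ∫ θ, ‖e θ‖^2 ∂μ := by
      exact integral_const_mul 2 _
    rw [hFU ω, hFU m, hAm]
    have hs := hsymm ω
    linarith
  refine ⟨hmS, isMinOn_iff.mpr hmin, ?_⟩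
  -- uniqueness
  intro ω hω hminω
  have hω1 : ‖ω‖ = 1 := hω.1
  have hFeq : (∫ θ, geod ω (U θ)^2 ∂μ) = ∫ θ, geod m (U θ)^2 ∂μ :=
    le_antisymm (isMinOn_iff.mp hminω m hmS) (hmin ω hω)
  -- the deficiency function
  set gg : Θ → ℝ := fun θ =>
    geod ω (expMap m (e θ))^2 + geod ω (expMap m (-(e θ)))^2 - 2*‖e θ‖^2 with hggdef
  have hggint : Integrable gg μ := ((hIgp ω).add (hIgm ω)).sub hIe
  have hggnn : 0 ≤ᵐ[μ] gg := by
    filter_upwards [hinj] with θ hθ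
    have := hkey ω hω1 (e θ) (hme θ) hθ.1
    simp only [hggdef, Pi.zero_apply]
    linarith
  have hggzero : ∫ θ, gg θ ∂μ = 0 := by
    have hIsum : Integrable
        (fun θ => geod ω (expMap m (e θ))^2 + geod ω (expMap m (-(e θ)))^2) μ :=
      (hIgp ω).add (hIgm ω)
    have h2 : ∫ θ, 2*‖e θ‖^2 ∂μ = 2 * ∫ θ, ‖e θ‖^2 ∂μ := integral_const_mul 2 _
    have hs := hsymm ω
    have hall := hFeq
    rw [hFU ω, hFU m, hAm] at hall
    simp only [hggdef]
    rw [integral_sub hIsum hIe, integral_add (hIgp ω) (hIgm ω)]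
    linarith
  have hggae : gg =ᵐ[μ] 0 := (integral_eq_zero_iff_of_nonneg_ae hggnn hggint).mp hggzero
  -- pick a point where everything holds
  have hne : (ae μ).NeBot := ae_neBot.mpr (IsProbabilityMeasure.ne_zero μ)
  obtain ⟨θ, hgθ, hθinj⟩ := (hggae.and hinj).exists
  set v : E3 := e θ with hvdef
  have hveq : geod ω (expMap m v)^2 + geod ω (expMap m (-v))^2 = 2*‖v‖^2 := by
    have : gg θ = 0 := hgθ
    simp only [hggdef] at this
    linarith
  have hinnerωm : (inner ℝ ω m : ℝ) = 1 := by
    rcases eq_or_ne v 0 with hv0 | hv0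
    · -- degenerate case: no noise at θ
      rw [hv0] at hveq
      rw [neg_zero, expMap_zero, norm_zero] at hveq
      have hd0 : geod ω m = 0 := zero_of_sq' (geod_nonneg ω m) hveq
      have h1 : (1:ℝ) ≤ inner ℝ ω m := Real.arccos_eq_zero.mp hd0
      exact le_antisymm (le_of_abs_le (inner_abs_le_one hω1 hm1)) h1
    · -- noise present: ω is the midpoint of a genuine geodesic
      have hvπ2 : ‖v‖ < π/2 := hθinj.1
      have hvpos : 0 < ‖v‖ := norm_pos_iff.mpr hv0
      have hmv : (inner ℝ m v : ℝ) = 0 := hme θ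
      have hmv' : (inner ℝ m (-v) : ℝ) = 0 := by rw [inner_neg_right, hmv]; ring
      have hp : ‖expMap m v‖ = 1 := norm_expMap hm1 hmv (by linarith)
      have hp' : ‖expMap m (-v)‖ = 1 := norm_expMap hm1 hmv' (by rw [norm_neg]; linarith)
      set d := geod ω (expMap m v) with hddef
      set d' := geod ω (expMap m (-v)) with hd'def
      have hd0 : 0 ≤ d := geod_nonneg _ _
      have hd'0 : 0 ≤ d' := geod_nonneg _ _
      have htri : 2*‖v‖ ≤ d + d' := by
        have h1 := geod_triangle (expMap m v) ω (expMap m (-v)) hp hω1 hp'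
        rw [geod_expMap_expMap_neg hm1 hmv hvπ2, geod_comm (expMap m v) ω] at h1
        linarith
      obtain ⟨hdt, hd't⟩ := midpoint_eq' (norm_nonneg v) hd0 hd'0 hveq htri
      have hip : (inner ℝ ω (expMap m v) : ℝ) = Real.cos ‖v‖ := by
        rw [← cos_geod hω1 hp, ← hddef, hdt]
      have hip' : (inner ℝ ω (expMap m (-v)) : ℝ) = Real.cos ‖v‖ := by
        rw [← cos_geod hω1 hp', ← hd'def, hd't]
      have hpp' : expMap m v + expMap m (-v) = (2 * Real.cos ‖v‖) • m := by
        rw [expMap, expMap_neg]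
        module
      have hsum2 : (2:ℝ) * Real.cos ‖v‖ * (inner ℝ ω m : ℝ) = 2 * Real.cos ‖v‖ := by
        have h1 : (inner ℝ ω (expMap m v + expMap m (-v)) : ℝ)
            = 2 * Real.cos ‖v‖ * (inner ℝ ω m : ℝ) := by
          rw [hpp', real_inner_smul_right]
        rw [inner_add_right, hip, hip'] at h1
        linarith
      have hcospos : 0 < Real.cos ‖v‖ :=
        Real.cos_pos_of_mem_Ioo ⟨by linarith, hvπ2⟩
      have hne2 : ((2:ℝ) * Real.cos ‖v‖) ≠ 0 := ne_of_gt (mul_pos two_pos hcospos)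
      have hx : (2 * Real.cos ‖v‖) * (inner ℝ ω m : ℝ) = (2 * Real.cos ‖v‖) * 1 := by
        rw [mul_one]; exact hsum2
      exact mul_left_cancel₀ hne2 hx
  -- conclude ω = m
  have hnorm0 : ‖ω - m‖^2 = 0 := by
    rw [norm_sub_sq_real, hω1, hm1, hinnerωm]; ring
  have : ω - m = 0 := norm_eq_zero.mp (pow_eq_zero_iff two_ne_zero |>.mp hnorm0)
  exact sub_eq_zero.mp this


end SphericalFrechet
end
end
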